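/- (Most atoms are good.) There is an absolute constant K > 0 with the following property. Assume the setting and conclusions of the full regularity lemma: a hypergraph system V = (J, (V_j)_{j∈J}, d, H_d) with H_j := ∂H_{j+1} for 0 ≤ j < d, numbers M_d ≤ F(M_d) ≤ M_{d−1} ≤ … ≤ M_0 ≤ F(M_0) for a growth function F, σ-algebras B_e ⊆ A_e for e ∈ H_d, and σ-algebras B_f ⊆ B'_f ⊆ A_f for f ∈ H_j (0 ≤ j < d), satisfying ℰ_{E_e}(∨_{f∈∂e} B'_f) − ℰ_{E_e}(∨_{f∈∂e} B_f) ≤ 1/F(M_j)² for all 1 ≤ j ≤ d, e ∈ H_j, E_e ∈ B_e. Then for every 0 ≤ j ≤ d, every e ∈ H_j, and every atom A_e of B_e, the set B_{e,A_e} defined below satisfies E(1_{A_e} 1_{B_{e,A_e}}) ≤ K / log F(M_j). Here B_{e,A_e} is the union of all sets ∩_{f⊊e} A_f, where each A_f ranges over atoms of B_f, for which at least one of the following two conditions fails: (i) E(1_{A_e} ∏_{f∈∂e} 1_{A_f}) ≥ (1/log F(M_j)) E(∏_{f∈∂e} 1_{A_f}); (ii) E(|E(1_{A_e} | ∨_{f∈∂e}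 B'_f) − E(1_{A_e} | ∨_{f∈∂e} B_f)|² ∏_{f⊊e} 1_{A_f}) ≤ (1/F(M_j)) E(∏_{f⊊e} 1_{A_f}). -/

import Mathlib

open scoped Classical BigOperators MeasureTheory

noncomputable section

/-- Average of a real-valued function over a finite type. -/
def avg {α : Type*} [Fintype α] (f : α → ℝ) : ℝ :=
  (∑ x, f x) / (Fintype.card α)

/-- Real-valued indicator function of a set. -/
def ind {α : Type*} (E : Set α) (x : α) : ℝ := if x ∈ E then 1 else 0

/-- Average of `f` over the set `A`. -/
def avgOn {α : Type*} [Fintype α] (A : Set α) (f : α → ℝ) : ℝ :=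
  (∑ x ∈ Finset.univ.filter (· ∈ A), f x) / ((Finset.univ.filter (· ∈ A)).card)

/-- The smallest set of the σ-algebra `m` containing `x`. -/
def atomAt {α : Type*} (m : MeasurableSpace α) (x : α) : Set α :=
  ⋂₀ {s | MeasurableSet[m] s ∧ x ∈ s}

/-- Conditional expectation: the average of `f` over the smallest `m`-set containing `x`. -/
def cexp {α : Type*} [Fintype α] (m : MeasurableSpace α) (f : α → ℝ) (x : α) : ℝ :=
  avgOn (atomAt m x) f

/-- The `E`-energy of a σ-algebra. -/
def energy {α : Type*} [Fintype α] (E : Set α) (m : MeasurableSpace α) : ℝ :=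
  avg (fun x => (cexp m (ind E) x) ^ 2)

/-- Complexity: the least number of sets needed to generate `m` as a σ-algebra. -/
def complexity {α : Type*} (m : MeasurableSpace α) : ℕ :=
  sInf {n | ∃ S : Finset (Set α), S.card = n ∧ MeasurableSpace.generateFrom (↑S : Set (Set α)) = m}

/-- The σ-algebra `A_e` of sets depending only on the coordinates indexed by `e`. -/
def cylAlg {J : Type*} (V : J → Type*) (e : Finset J) : MeasurableSpace (∀ j, V j) :=
  MeasurableSpace.comap (fun x (j : e) => x j.1) ⊤

/-- The skeleton `∂e = {f ⊊ e : |f| = |e| - 1}`. -/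
def skel {J : Type*} (e : Finset J) : Finset (Finset J) :=
  e.image (fun j => e.erase j)

/-- The boundary `∂H` of a hypergraph. -/
def hbd {J : Type*} (H : Finset (Finset J)) : Finset (Finset J) :=
  H.biUnion skel

/-- The `e`-discrepancy of `E` relative to the σ-algebra `m`. -/
def disc {J : Type*} [Fintype J] (V : J → Type*) [∀ j, Fintype (V j)]
    (e : Finset J) (E : Set (∀ j, V j)) (m : MeasurableSpace (∀ j, V j)) : ℝ :=
  sSup { r | ∃ Ef : Finset J → Set (∀ j, V j),
    (∀ f ∈ skel e, MeasurableSet[cylAlg V f] (Ef f)) ∧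
    r = |avg (fun x => (ind E x - cexp m (ind E) x) * ∏ f ∈ skel e, ind (Ef f) x)| }

/-- A growth function: increasing on positives and at least `1 + x`. -/
def IsGrowth (F : ℝ → ℝ) : Prop :=
  (∀ x y, 0 < x → x < y → F x < F y) ∧ ∀ x, 0 < x → 1 + x ≤ F x

/-- An atom of a σ-algebra on a finite set: a minimal non-empty measurable set. -/
def IsAtomOf {α : Type*} (m : MeasurableSpace α) (A : Set α) : Prop :=
  MeasurableSet[m] A ∧ A.Nonempty ∧ ∀ s, MeasurableSet[m] s → s ⊆ A → s = ∅ ∨ s = A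

end

noncomputable section

/-- The bad set `B_{e,A_e}`: the union of all sets `⋂_{f⊊e} A_f`, with each `A_f` an atom
of `B_f`, for which the largeness estimate (i) or the regularity estimate (ii) fails. -/
def badSet {J : Type} [Fintype J] (V : J → Type) [∀ i, Fintype (V i)]
    (B B' : Finset J → MeasurableSpace (∀ i, V i)) (F : ℝ → ℝ) (Mj : ℝ)
    (e : Finset J) (Ae : Set (∀ i, V i)) : Set (∀ i, V i) :=
  {x | ∃ A : Finset J → Set (∀ i, V i),
    (∀ f, f ⊂ e → IsAtomOf (B f) (A f)) ∧
    ¬ (((1 / Real.log (F Mj)) * avg (fun y => ∏ f ∈ skel e, ind (A f) y)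
          ≤ avg (fun y => ind Ae y * ∏ f ∈ skel e, ind (A f) y)) ∧
       (avg (fun y => (cexp (⨆ f ∈ skel e, B' f) (ind Ae) y
              - cexp (⨆ f ∈ skel e, B f) (ind Ae) y) ^ 2 * ∏ f ∈ e.ssubsets, ind (A f) y)
          ≤ (1 / F Mj) * avg (fun y => ∏ f ∈ e.ssubsets, ind (A f) y))) ∧
    x ∈ ⋂ (f : Finset J) (_ : f ⊂ e), A f}

end

/-!
Call the nonempty sets `⋂_{f ∈ ∂e} A_f` and `⋂_{f ⊊ e} A_f` (each `A_f` an atom of `B_f`) the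
coarse and the fine cells; each kind partitions `V_J`. A point of `A_e ∩ B_{e,A_e}` lies in a
coarse cell in which `A_e` has relative density below `1 / log F(M_j)`, or in a fine cell on which
the mean square of `Δ := E(1_{A_e} | ∨ B'_f) - E(1_{A_e} | ∨ B_f)` exceeds `1 / F(M_j)`. Summing
over cells, the first kind contributes at most `1 / log F(M_j)` to `E(1_{A_e} 1_{B_{e,A_e}})`, the
second at most `F(M_j) E(Δ²)`. By Pythagoras `E(Δ²)` is the energy increment, at most
`1 / F(M_j)²`; as `log x ≤ x`, the constant `K = 2` works.
-/

section Atoms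

variable {α : Type*}

lemma mem_atomAt (m : MeasurableSpace α) (x : α) : x ∈ atomAt m x :=
  Set.mem_sInter.2 fun _ hs => hs.2

lemma atomAt_subset {m : MeasurableSpace α} {x : α} {s : Set α}
    (hs : MeasurableSet[m] s) (hx : x ∈ s) : atomAt m x ⊆ s :=
  Set.sInter_subset_of_mem ⟨hs, hx⟩

lemma measurableSet_atomAt [Finite α] (m : MeasurableSpace α) (x : α) :
    MeasurableSet[m] (atomAt m x) :=
  MeasurableSet.sInter (Set.to_countable _) fun _ hs => hs.1

lemma atomAt_eq_of_mem {m : MeasurableSpace α} {x y : α} (h : y ∈ atomAt m x) :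
    atomAt m y = atomAt m x :=
  Set.Subset.antisymm
    (Set.subset_sInter fun s hs => atomAt_subset hs.1 (Set.mem_sInter.1 h s hs))
    (Set.subset_sInter fun s hs => atomAt_subset hs.1 <| by
      by_contra hx
      exact Set.mem_sInter.1 h sᶜ ⟨hs.1.compl, hx⟩ hs.2)

lemma mem_atomAt_comm {m : MeasurableSpace α} {x y : α} :
    y ∈ atomAt m x ↔ x ∈ atomAt m y :=
  ⟨fun h => atomAt_eq_of_mem h ▸ mem_atomAt m x, fun h => atomAt_eq_of_mem h ▸ mem_atomAt m y⟩

lemma atomAt_mono {m m' : MeasurableSpace α} (h : m ≤ m') (x : α) :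
    atomAt m' x ⊆ atomAt m x :=
  Set.subset_sInter fun _ hs => Set.sInter_subset_of_mem ⟨h _ hs.1, hs.2⟩

lemma IsAtomOf.eq_atomAt [Finite α] {m : MeasurableSpace α} {A : Set α} {x : α}
    (hA : IsAtomOf m A) (hx : x ∈ A) : A = atomAt m x :=
  (hA.2.2 _ (measurableSet_atomAt m x) (atomAt_subset hA.1 hx)).resolve_left
    (Set.nonempty_iff_ne_empty.1 ⟨x, mem_atomAt m x⟩) |>.symm

def cell {ι : Type*} (B : ι → MeasurableSpace α) (s : Finset ι) (x : α) : Set α :=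
  ⋂ f ∈ s, atomAt (B f) x

lemma mem_cell {ι : Type*} (B : ι → MeasurableSpace α) (s : Finset ι) (x : α) :
    x ∈ cell B s x :=
  Set.mem_iInter₂.2 fun f _ => mem_atomAt (B f) x

lemma mem_cell_iff_cell_eq {ι : Type*} (B : ι → MeasurableSpace α) (s : Finset ι) (x y : α) :
    y ∈ cell B s x ↔ cell B s y = cell B s x :=
  ⟨fun h => Set.iInter₂_congr fun f hf => atomAt_eq_of_mem (Set.mem_iInter₂.1 h f hf),
    fun h => h ▸ mem_cell B s y⟩

end Atoms

section Averages

variable {α : Type*}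

lemma ind_nonneg (E : Set α) (x : α) : 0 ≤ ind E x := by
  unfold ind; split_ifs <;> norm_num

lemma ind_le_one (E : Set α) (x : α) : ind E x ≤ 1 := by
  unfold ind; split_ifs <;> norm_num

lemma ind_le_add_of_subset_union {S T U : Set α} (h : S ⊆ T ∪ U) (x : α) :
    ind S x ≤ ind T x + ind U x := by
  have hx := @h x
  unfold ind
  split_ifs <;> simp_all

lemma prod_ind {ι : Type*} (s : Finset ι) (A : ι → Set α) (x : α) :
    ∏ f ∈ s, ind (A f) x = ind (⋂ f ∈ s, A f) x := by
  simp [ind, Finset.prod_ite_zero]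

variable [Fintype α]

lemma sum_mul_ind (g : α → ℝ) (S : Set α) [DecidablePred (· ∈ S)] :
    ∑ x, g x * ind S x = ∑ x ∈ Finset.univ.filter (· ∈ S), g x := by
  simp [ind, Finset.sum_filter]

lemma avg_add (f g : α → ℝ) : avg (fun x => f x + g x) = avg f + avg g := by
  simp only [avg, Finset.sum_add_distrib, add_div]

lemma avg_mono {f g : α → ℝ} (h : ∀ x, f x ≤ g x) : avg f ≤ avg g :=
  div_le_div_of_nonneg_right (Finset.sum_le_sum fun x _ => h x) (Nat.cast_nonneg _)

lemma avg_const [Nonempty α] (c : ℝ) : avg (fun _ : α => c) = c := by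
  simp [avg]

lemma avg_le_mul_avg_iff [Nonempty α] {f g : α → ℝ} {r : ℝ} :
    avg f ≤ r * avg g ↔ ∑ x, f x ≤ r * ∑ x, g x := by
  rw [avg, avg, ← mul_div_assoc,
    div_le_div_iff_of_pos_right (by exact_mod_cast Fintype.card_pos)]

lemma avg_mul_ind_setOf_not_le [Nonempty α] {C : α → Set α} (hC : ∀ x y, y ∈ C x ↔ C y = C x)
    {P : Set α → Prop} {g h : α → ℝ} {r : ℝ} (hh : ∀ x, 0 ≤ h x) (hr : 0 ≤ r)
    (hbad : ∀ x, ¬ P (C x) →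
      avg (fun y => g y * ind (C x) y) ≤ r * avg (fun y => h y * ind (C x) y)) :
    avg (fun y => g y * ind {z | ¬ P (C z)} y) ≤ r * avg h := by
  simp only [avg_le_mul_avg_iff, sum_mul_ind] at hbad ⊢
  set s := Finset.univ.filter (· ∈ {z | ¬ P (C z)})
  have hfiber : ∀ x ∈ s, s.filter (C · = C x) = Finset.univ.filter (C · = C x) := by
    intro x hx
    ext y
    simp only [s, Finset.mem_filter, Finset.mem_univ, true_and, Set.mem_ofPred_eq] at hx ⊢
    exact ⟨And.right, fun hy => ⟨hy ▸ hx, hy⟩⟩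
  have hcell : ∀ x, Finset.univ.filter (C · = C x) = Finset.univ.filter (· ∈ C x) := fun x =>
    Finset.filter_congr fun y _ => (hC x y).symm
  rw [← Finset.sum_fiberwise_of_maps_to (t := s.image C)
    (fun x hx => Finset.mem_image_of_mem C hx)]
  calc ∑ b ∈ s.image C, ∑ x ∈ s with C x = b, g x
      ≤ ∑ b ∈ s.image C, r * ∑ x with C x = b, h x := Finset.sum_le_sum fun b hb => by
        obtain ⟨x, hx, rfl⟩ := Finset.mem_image.1 hb
        rw [hfiber x hx, hcell]
        exact hbad x (Finset.mem_filter.1 hx).2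
    _ ≤ ∑ b ∈ Finset.univ.image C, r * ∑ x with C x = b, h x :=
        Finset.sum_le_sum_of_subset_of_nonneg
          (Finset.image_subset_image (Finset.filter_subset _ _))
          fun _ _ _ => mul_nonneg hr (Finset.sum_nonneg fun x _ => hh x)
    _ = r * ∑ x, h x := by
        rw [← Finset.mul_sum, Finset.sum_fiberwise_of_maps_to
          fun x _ => Finset.mem_image_of_mem C (Finset.mem_univ x)]

end Averages

section ConditionalExpectation

variable {α : Type*} [Fintype α]

lemma cexp_eq_of_mem_atomAt {m : MeasurableSpace α} {x y : α} (h : y ∈ atomAt m x)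
    (f : α → ℝ) : cexp m f y = cexp m f x := by
  rw [cexp, cexp, atomAt_eq_of_mem h]

lemma sum_cexp_mul (m : MeasurableSpace α) (f h : α → ℝ)
    (hh : ∀ x, ∀ y ∈ atomAt m x, h y = h x) :
    ∑ x, cexp m f x * h x = ∑ x, f x * h x := by
  set c : α → ℝ := fun x => (Finset.univ.filter (· ∈ atomAt m x)).card
  have hc : ∀ x, c x ≠ 0 := fun x => Nat.cast_ne_zero.2 <| Finset.card_ne_zero_of_mem <|
    Finset.mem_filter.2 ⟨Finset.mem_univ x, mem_atomAt m x⟩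
  -- `y ∈ atomAt m x` is symmetric and then `h`, `c` agree at `x` and `y`, so the sums swap.
  calc ∑ x, cexp m f x * h x
      = ∑ x, ∑ y, if y ∈ atomAt m x then f y * h y / c y else 0 := by
        refine Finset.sum_congr rfl fun x _ => ?_
        rw [← Finset.sum_filter, cexp, avgOn, div_mul_eq_mul_div, Finset.sum_mul,
          Finset.sum_div]
        refine Finset.sum_congr rfl fun y hy => ?_
        have hy := (Finset.mem_filter.1 hy).2
        simp only [c, hh x y hy, atomAt_eq_of_mem hy]
    _ = ∑ y, ∑ x, if x ∈ atomAt m y then f y * h y / c y else 0 := by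
        rw [Finset.sum_comm]
        simp only [mem_atomAt_comm]
    _ = ∑ y, f y * h y := by
        refine Finset.sum_congr rfl fun y _ => ?_
        rw [← Finset.sum_filter, Finset.sum_const, nsmul_eq_mul, mul_div_cancel₀ _ (hc y)]

lemma avg_sq_cexp_sub {m m' : MeasurableSpace α} (hle : m ≤ m') (f : α → ℝ) :
    avg (fun x => (cexp m' f x - cexp m f x) ^ 2)
      = avg (fun x => cexp m' f x ^ 2) - avg (fun x => cexp m f x ^ 2) := by
  have hconst : ∀ m'' : MeasurableSpace α, m ≤ m'' → ∀ x, ∀ y ∈ atomAt m'' x,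
      cexp m f y = cexp m f x := fun _ h x _ hy => cexp_eq_of_mem_atomAt (atomAt_mono h x hy) f
  have h₁ := sum_cexp_mul m f _ (hconst m le_rfl)
  have h₂ := sum_cexp_mul m' f _ (hconst m' hle)
  simp only [avg, ← sub_div]
  congr 1
  have hexpand : ∀ x, (cexp m' f x - cexp m f x) ^ 2
      = cexp m' f x ^ 2 - 2 * (cexp m' f x * cexp m f x) + cexp m f x * cexp m f x := by
    intro x; ring
  simp only [hexpand, Finset.sum_add_distrib, Finset.sum_sub_distrib, ← Finset.mul_sum, h₁, h₂,
    sq]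
  ring

lemma energy_sub_energy {m m' : MeasurableSpace α} (hle : m ≤ m') (E : Set α) :
    energy E m' - energy E m = avg (fun x => (cexp m' (ind E) x - cexp m (ind E) x) ^ 2) :=
  (avg_sq_cexp_sub hle (ind E)).symm

end ConditionalExpectation

section Hypergraphs

variable {J : Type*}

lemma ssubset_of_mem_skel {e f : Finset J} (h : f ∈ skel e) : f ⊂ e := by
  obtain ⟨j, hj, rfl⟩ := Finset.mem_image.1 h
  exact Finset.erase_ssubset hj

lemma card_add_of_mem_iterate_hbd {H : Finset (Finset J)} {d : ℕ} (hH : ∀ e ∈ H, e.card = d) :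
    ∀ k, ∀ e ∈ hbd^[k] H, e.card + k = d
  | 0, e, he => hH e he
  | k + 1, f, hf => by
    rw [Function.iterate_succ_apply', hbd, Finset.mem_biUnion] at hf
    obtain ⟨e, he, hfe⟩ := hf
    obtain ⟨j, hj, rfl⟩ := Finset.mem_image.1 hfe
    have := card_add_of_mem_iterate_hbd hH k e he
    have := Finset.card_erase_add_one hj
    omega

lemma mem_iterate_hbd_succ_of_mem_skel {H : Finset (Finset J)} {k : ℕ} {e f : Finset J}
    (he : e ∈ hbd^[k] H) (hf : f ∈ skel e) : f ∈ hbd^[k + 1] H := by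
  rw [Function.iterate_succ_apply', hbd, Finset.mem_biUnion]
  exact ⟨e, he, hf⟩

lemma avg_sq_cexp_iSup_skel_sub_le [Fintype J] {V : J → Type*} [∀ i, Fintype (V i)]
    {H : Finset (Finset J)} {d : ℕ} (hH : ∀ e ∈ H, e.card = d)
    {B B' : Finset J → MeasurableSpace (∀ i, V i)}
    (hBB' : ∀ j < d, ∀ f ∈ hbd^[d - j] H, B f ≤ B' f) {c : ℕ → ℝ} (hc : 0 ≤ c 0)
    (hE : ∀ j, 1 ≤ j → j ≤ d → ∀ e ∈ hbd^[d - j] H,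
      ∀ E : Set (∀ i, V i), MeasurableSet[B e] E →
        energy E (⨆ f ∈ skel e, B' f) - energy E (⨆ f ∈ skel e, B f) ≤ c j)
    {j : ℕ} (hj : j ≤ d) {e : Finset J} (he : e ∈ hbd^[d - j] H)
    {E : Set (∀ i, V i)} (hEe : MeasurableSet[B e] E) :
    avg (fun x =>
        (cexp (⨆ f ∈ skel e, B' f) (ind E) x - cexp (⨆ f ∈ skel e, B f) (ind E) x) ^ 2) ≤ c j := by
  rcases Nat.eq_zero_or_pos j with rfl | hj₁
  · have he₀ : e = ∅ := Finset.card_eq_zero.1 (by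
      have := card_add_of_mem_iterate_hbd hH (d - 0) e he
      omega)
    simpa [he₀, skel, avg] using hc
  · have hle : (⨆ f ∈ skel e, B f) ≤ ⨆ f ∈ skel e, B' f := iSup₂_mono fun f hf =>
      hBB' (j - 1) (by omega) f <| by
        rw [show d - (j - 1) = d - j + 1 by omega]
        exact mem_iterate_hbd_succ_of_mem_skel he hf
    rw [← energy_sub_energy hle]
    exact hE j hj₁ hj e he E hEe

end Hypergraphs

lemma IsGrowth.one_lt {F : ℝ → ℝ} (hF : IsGrowth F) {x : ℝ} (hx : 0 < x) : 1 < F x := by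
  linarith [hF.2 x hx]

lemma pos_of_le_growth_succ {F : ℝ → ℝ} (hF : IsGrowth F) {M : ℕ → ℝ} {d : ℕ} (hMd : 0 < M d)
    (hFM : ∀ j < d, F (M (j + 1)) ≤ M j) {j : ℕ} (hj : j ≤ d) : 0 < M j := by
  induction hj using Nat.decreasingInduction with
  | self => exact hMd
  | of_succ k hk ih => linarith [hF.one_lt ih, hFM k hk]

section Cells

variable {α : Type*} [Fintype α]

-- Conditions (i) and (ii) in the definition of `B_{e,A_e}`, for a cell `S = ⋂ A_f`.
def RelDenseOn (c : ℝ) (E S : Set α) : Prop :=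
  c * avg (ind S) ≤ avg (fun y => ind E y * ind S y)

def MeanSqLeOn (c : ℝ) (φ : α → ℝ) (S : Set α) : Prop :=
  avg (fun y => φ y ^ 2 * ind S y) ≤ c * avg (ind S)

variable [Nonempty α] {C : α → Set α}

lemma avg_ind_mul_ind_not_relDenseOn_le (hC : ∀ x y, y ∈ C x ↔ C y = C x) (E : Set α)
    {c : ℝ} (hc : 0 ≤ c) :
    avg (fun y => ind E y * ind {z | ¬ RelDenseOn c E (C z)} y) ≤ c := by
  have := avg_mul_ind_setOf_not_le hC (P := RelDenseOn c E) (g := ind E) (h := fun _ => 1)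
    (fun _ => zero_le_one) hc fun x hx => by
      rw [RelDenseOn, not_le] at hx
      simpa only [one_mul] using hx.le
  rwa [avg_const, mul_one] at this

lemma avg_ind_mul_ind_not_meanSqLeOn_le (hC : ∀ x y, y ∈ C x ↔ C y = C x) (E : Set α)
    (φ : α → ℝ) {c : ℝ} (hc : 0 < c) :
    avg (fun y => ind E y * ind {z | ¬ MeanSqLeOn c φ (C z)} y)
      ≤ c⁻¹ * avg (fun y => φ y ^ 2) :=
  avg_mul_ind_setOf_not_le hC (fun _ => sq_nonneg _) (inv_nonneg.2 hc.le) fun x hx =>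
    calc avg (fun y => ind E y * ind (C x) y)
        ≤ avg (ind (C x)) :=
          avg_mono fun _ => mul_le_of_le_one_left (ind_nonneg _ _) (ind_le_one _ _)
      _ ≤ c⁻¹ * avg (fun y => φ y ^ 2 * ind (C x) y) := (le_inv_mul_iff₀ hc).2 (not_le.1 hx).le

end Cells

lemma not_relDenseOn_or_not_meanSqLeOn_of_mem_badSet {J : Type} [Fintype J] {V : J → Type}
    [∀ i, Fintype (V i)] {B B' : Finset J → MeasurableSpace (∀ i, V i)} {F : ℝ → ℝ} {Mj : ℝ}
    {e : Finset J} {Ae : Set (∀ i, V i)} {x : ∀ i, V i} (hx : x ∈ badSet V B B' F Mj e Ae) :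
    ¬ RelDenseOn (1 / Real.log (F Mj)) Ae (cell B (skel e) x) ∨
      ¬ MeanSqLeOn (1 / F Mj) (fun y => cexp (⨆ f ∈ skel e, B' f) (ind Ae) y
        - cexp (⨆ f ∈ skel e, B f) (ind Ae) y) (cell B e.ssubsets x) := by
  obtain ⟨A, hA, hbad, hxA⟩ := hx
  have hcell : ∀ s : Finset (Finset J), (∀ f ∈ s, f ⊂ e) →
      ∀ y, ∏ f ∈ s, ind (A f) y = ind (cell B s x) y := fun s hs y => by
    rw [cell, ← prod_ind]
    exact Finset.prod_congr rfl fun f hf => by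
      rw [(hA f (hs f hf)).eq_atomAt (Set.mem_iInter₂.1 hxA f (hs f hf))]
  simp only [hcell _ fun _ => ssubset_of_mem_skel, hcell _ fun _ => Finset.mem_ssubsets.1]
    at hbad
  exact not_and_or.1 hbad

/-- **Most atoms are good.**
In the setting and with the conclusions of the full regularity lemma (with
`H_j := ∂H_{j+1}` realized as `hbd^[d - j] H`), for every `0 ≤ j ≤ d`, every `e ∈ H_j`
and every atom `A_e` of `B_e`, the bad set `B_{e,A_e}` satisfies
`E(1_{A_e} 1_{B_{e,A_e}}) ≤ K / log F(M_j)` for an absolute constant `K > 0`. -/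
theorem most_atoms_are_good :
    ∃ K : ℝ, 0 < K ∧
    ∀ (J : Type) [Fintype J]
      (V : J → Type) [∀ i, Fintype (V i)] [∀ i, Nonempty (V i)]
      (d : ℕ), 1 ≤ d →
    ∀ (H : Finset (Finset J)), (∀ e ∈ H, e.card = d) →
    ∀ F : ℝ → ℝ, IsGrowth F →
    ∀ M : ℕ → ℝ, 0 < M d →
      (∀ j ≤ d, M j ≤ F (M j)) → (∀ j < d, F (M (j + 1)) ≤ M j) →
    ∀ (B B' : Finset J → MeasurableSpace (∀ i, V i)),
      (∀ e ∈ H, B e ≤ cylAlg V e) →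
      (∀ j < d, ∀ f ∈ hbd^[d - j] H, B f ≤ B' f ∧ B' f ≤ cylAlg V f) →
      (∀ j, 1 ≤ j → j ≤ d → ∀ e ∈ hbd^[d - j] H,
        ∀ E : Set (∀ i, V i), MeasurableSet[B e] E →
          energy E (⨆ f ∈ skel e, B' f) - energy E (⨆ f ∈ skel e, B f)
            ≤ 1 / (F (M j)) ^ 2) →
    ∀ j ≤ d, ∀ e ∈ hbd^[d - j] H, ∀ Ae : Set (∀ i, V i), IsAtomOf (B e) Ae →
      avg (fun x => ind Ae x * ind (badSet V B B' F (M j) e Ae) x)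
        ≤ K / Real.log (F (M j)) := by
  refine ⟨2, two_pos, ?_⟩
  intro J _ V _ _ d _ H hH F hF M hMd _ hFM B B' _ hBB' hE j hj e he Ae hAe
  have hF₁ : 1 < F (M j) := hF.one_lt (pos_of_le_growth_succ hF hMd hFM hj)
  have hF₀ : 0 < F (M j) := zero_lt_one.trans hF₁
  have hlog : 0 < Real.log (F (M j)) := Real.log_pos hF₁
  set Δ := fun y => cexp (⨆ f ∈ skel e, B' f) (ind Ae) y - cexp (⨆ f ∈ skel e, B f) (ind Ae) y
  set U₁ := {z | ¬ RelDenseOn (1 / Real.log (F (M j))) Ae (cell B (skel e) z)}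
  set U₂ := {z | ¬ MeanSqLeOn (1 / F (M j)) Δ (cell B e.ssubsets z)}
  have hΔ : avg (fun y => Δ y ^ 2) ≤ 1 / F (M j) ^ 2 := avg_sq_cexp_iSup_skel_sub_le hH
    (fun j hj f hf => (hBB' j hj f hf).1) (by positivity) hE hj he hAe.1
  have h₁ := avg_ind_mul_ind_not_relDenseOn_le (mem_cell_iff_cell_eq B (skel e)) Ae
    (one_div_pos.2 hlog).le
  have h₂ := avg_ind_mul_ind_not_meanSqLeOn_le (mem_cell_iff_cell_eq B e.ssubsets) Ae Δ
    (one_div_pos.2 hF₀)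
  calc avg (fun x => ind Ae x * ind (badSet V B B' F (M j) e Ae) x)
      ≤ avg (fun x => ind Ae x * ind U₁ x + ind Ae x * ind U₂ x) := avg_mono fun x => by
        rw [← mul_add]
        exact mul_le_mul_of_nonneg_left (ind_le_add_of_subset_union
          (fun _ => not_relDenseOn_or_not_meanSqLeOn_of_mem_badSet) x) (ind_nonneg _ _)
    _ ≤ 1 / Real.log (F (M j)) + 1 / F (M j) := by
        rw [avg_add]
        refine add_le_add h₁ (h₂.trans ?_)
        calc (1 / F (M j))⁻¹ * avg (fun y => Δ y ^ 2) ≤ F (M j) * (1 / F (M j) ^ 2) := by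
              rw [one_div, inv_inv]; gcongr
          _ = 1 / F (M j) := by field_simp
    _ ≤ 1 / Real.log (F (M j)) + 1 / Real.log (F (M j)) := by
        gcongr
        exact Real.log_le_self hF₀.le
    _ = 2 / Real.log (F (M j)) := by ring
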